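/- arXiv:2101.02541 — 4 statements merged into one kernel-verified Lean document; each statement's English description precedes it below -/
import Mathlib

section
/- For all integers i ≥ 3, j ≥ 1 and 0 ≤ k ≤ i−1, the twisted toroidal grid graph T(i,j,k) contains a Hamiltonian cycle. -/
/-!
The wrap-around edges are not needed. Writing `i = m + 1`, a Hamiltonian cycle runs
boustrophedon, row by row, through the columns `0, …, m - 1`, steps in the top row `j - 1`
into column `m` (by `+1` or, for odd `j - 1`, by the row edge `m + 1 = 0`), descends column `m`
to row `0` and closes with the row edge from `(0, m)` to `(0, 0)`. Numbering its vertices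
`0, …, (m + 1) j - 1` gives a bijective homomorphism from the cycle graph `C_{(m+1) j}`.
-/

/-- The twisted toroidal grid `T(i,j,k)` on vertex set `Fin j × ZMod i`, with row edges
`{(b,a),(b,a+1)}`, vertical edges `{(b,a),(b+1,a)}` for `0 ≤ b < j-1`, and wrap-around
edges `{(j-1,a),(0,a+k)}`. -/
def twistedGrid (i j k : ℕ) : SimpleGraph (Fin j × ZMod i) :=
  SimpleGraph.fromRel (fun p q =>
    (p.1 = q.1 ∧ q.2 = p.2 + 1) ∨
    ((q.1 : ℕ) = (p.1 : ℕ) + 1 ∧ q.2 = p.2) ∨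
    ((p.1 : ℕ) = j - 1 ∧ (q.1 : ℕ) = 0 ∧ q.2 = p.2 + (k : ZMod i)))

open Function SimpleGraph

namespace SimpleGraph
variable {V : Type*} [DecidableEq V] {G : SimpleGraph V}

theorem exists_isHamiltonianCycle_of_bijective_hom {n : ℕ} (hn : 3 ≤ n) (f : cycleGraph n →g G)
    (hf : Bijective f) : ∃ (v : V) (p : G.Walk v v), p.IsHamiltonianCycle := by
  obtain ⟨m, rfl⟩ : ∃ m, n = m + 3 := ⟨n - 3, by omega⟩
  have hcycle : (cycleGraph.cycle m).IsHamiltonianCycle := by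
    rw [Walk.isHamiltonianCycle_iff_isCycle_and_length_eq]
    exact ⟨cycleGraph.isCycle_cycle, by simp⟩
  exact ⟨_, _, hcycle.map hf⟩

theorem exists_isHamiltonianCycle_of_injOn [Fintype V] {n : ℕ} (hn : 3 ≤ n)
    (hV : Fintype.card V = n) (f : ℕ → V) (hf : Set.InjOn f (Set.Iio n))
    (hadj : ∀ t, t + 1 < n → G.Adj (f t) (f (t + 1))) (hwrap : G.Adj (f (n - 1)) (f 0)) :
    ∃ (v : V) (p : G.Walk v v), p.IsHamiltonianCycle := by
  obtain ⟨m, rfl⟩ : ∃ m, n = m + 3 := ⟨n - 3, by omega⟩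
  have hsucc : ∀ u v : Fin (m + 3), v - u = 1 → G.Adj (f u) (f v) := by
    intro u v h
    rw [sub_eq_iff_eq_add'] at h
    subst h
    rw [Fin.val_add_one]
    split_ifs with hu
    · simpa [hu] using hwrap
    · exact hadj u (by have := Fin.val_lt_last hu; omega)
  have hinj : Injective fun t : Fin (m + 3) => f t :=
    fun u v h => Fin.ext (hf u.isLt v.isLt h)
  refine exists_isHamiltonianCycle_of_bijective_hom hn ⟨fun t => f t, ?_⟩
    ((Fintype.bijective_iff_injective_and_card _).2 ⟨hinj, by simp [hV]⟩)
  rintro u v (h | h)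
  · exact (hsucc v u h).symm
  · exact hsucc u v h

end SimpleGraph

def boustrophedon (m t : ℕ) : ℕ × ℕ :=
  (t / m, if Even (t / m) then t % m else m - 1 - t % m)

section Boustrophedon
variable {m : ℕ}

theorem boustrophedon_mul_add {r c : ℕ} (hc : c < m) :
    boustrophedon m (m * r + c) = (r, if Even r then c else m - 1 - c) := by
  have hdiv : (m * r + c) / m = r := by
    rw [Nat.mul_add_div (by omega), Nat.div_eq_of_lt hc, add_zero]
  simp only [boustrophedon, hdiv, Nat.mul_add_mod, Nat.mod_eq_of_lt hc]

theorem boustrophedon_snd_lt (hm : 0 < m) (t : ℕ) : (boustrophedon m t).2 < m := by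
  have := Nat.mod_lt t hm
  unfold boustrophedon
  split_ifs <;> omega

theorem boustrophedon_injective (hm : 0 < m) : Injective (boustrophedon m) := by
  intro s t h
  rw [← Nat.div_add_mod s m, ← Nat.div_add_mod t m,
    boustrophedon_mul_add (Nat.mod_lt s hm), boustrophedon_mul_add (Nat.mod_lt t hm),
    Prod.mk.injEq] at h
  obtain ⟨hrow, hcol⟩ := h
  rw [hrow] at hcol
  have := Nat.mod_lt s hm
  have := Nat.mod_lt t hm
  rw [← Nat.div_add_mod s m, ← Nat.div_add_mod t m, hrow]
  split_ifs at hcol <;> omega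

theorem boustrophedon_adj_succ (hm : 0 < m) (t : ℕ) :
    (hasse ℕ □ hasse ℕ).Adj (boustrophedon m t) (boustrophedon m (t + 1)) := by
  obtain ⟨r, c, hc, rfl⟩ : ∃ r c, c < m ∧ m * r + c = t :=
    ⟨t / m, t % m, Nat.mod_lt t hm, Nat.div_add_mod t m⟩
  rw [boustrophedon_mul_add hc]
  by_cases hc' : c + 1 < m
  · rw [add_assoc, boustrophedon_mul_add hc']
    simp only [boxProd_adj, hasse_adj, Nat.covBy_iff_add_one_eq, and_true]
    split_ifs <;> omega
  · rw [show m * r + c + 1 = m * (r + 1) + 0 by rw [mul_add]; omega, boustrophedon_mul_add hm]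
    simp only [boxProd_adj, hasse_adj, Nat.covBy_iff_add_one_eq, Nat.even_add_one, true_or,
      true_and]
    split_ifs <;> omega

end Boustrophedon

/-- Rows are reduced mod `j`, so this is injective only on rows `< j`. -/
def gridVertex (i j : ℕ) [NeZero j] (p : ℕ × ℕ) : Fin j × ZMod i := (Fin.ofNat j p.1, p.2)

section TwistedGrid
variable {i j k : ℕ}

theorem twistedGrid_adj_of_snd_eq_add_one (hi : 1 < i) {b : Fin j} {x y : ZMod i}
    (h : y = x + 1) : (twistedGrid i j k).Adj (b, x) (b, y) := by
  have : Fact (1 < i) := ⟨hi⟩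
  refine (fromRel_adj _ _ _).2 ⟨?_, .inl (.inl ⟨rfl, h⟩)⟩
  simp [h]

theorem twistedGrid_adj_of_fst_eq_add_one {b c : Fin j} (h : (c : ℕ) = b + 1) (x : ZMod i) :
    (twistedGrid i j k).Adj (b, x) (c, x) := by
  refine (fromRel_adj _ _ _).2 ⟨?_, .inl (.inr (.inl ⟨h, rfl⟩))⟩
  simp [Fin.ext_iff, h]

variable [NeZero j]

theorem gridVertex_injOn [NeZero i] : Set.InjOn (gridVertex i j) {p | p.1 < j ∧ p.2 < i} := by
  rintro ⟨r, c⟩ ⟨hr, hc⟩ ⟨r', c'⟩ ⟨hr', hc'⟩ h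
  simp only [gridVertex, Prod.mk.injEq, Fin.ext_iff, Fin.val_ofNat] at h
  have hcol := congrArg ZMod.val h.2
  simp only [ZMod.val_natCast] at hcol
  simp_all [Nat.mod_eq_of_lt]

theorem twistedGrid_adj_gridVertex (hi : 1 < i) {p q : ℕ × ℕ} (hp : p.1 < j) (hq : q.1 < j)
    (h : (hasse ℕ □ hasse ℕ).Adj p q) :
    (twistedGrid i j k).Adj (gridVertex i j p) (gridVertex i j q) := by
  obtain ⟨r, c⟩ := p
  obtain ⟨r', c'⟩ := q
  simp only [boxProd_adj, hasse_adj, Nat.covBy_iff_add_one_eq] at h hp hq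
  rcases h with ⟨rfl | rfl, rfl⟩ | ⟨rfl | rfl, rfl⟩
  · exact twistedGrid_adj_of_fst_eq_add_one (by simp [Nat.mod_eq_of_lt, *]) _
  · exact (twistedGrid_adj_of_fst_eq_add_one (by simp [Nat.mod_eq_of_lt, *]) _).symm
  · exact twistedGrid_adj_of_snd_eq_add_one hi (by simp)
  · exact (twistedGrid_adj_of_snd_eq_add_one hi (by simp)).symm

theorem twistedGrid_adj_gridVertex_last {m : ℕ} (hm : 0 < m) (r : ℕ) :
    (twistedGrid (m + 1) j k).Adj (gridVertex (m + 1) j (r, m)) (gridVertex (m + 1) j (r, 0)) :=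
  twistedGrid_adj_of_snd_eq_add_one (by omega) (by simp)

end TwistedGrid

def snakeCoord (m j t : ℕ) : ℕ × ℕ :=
  if t < m * j then boustrophedon m t else ((m + 1) * j - 1 - t, m)

section Snake
variable {m j k : ℕ}

theorem snakeCoord_mem {t : ℕ} (ht : t < (m + 1) * j) :
    (snakeCoord m j t).1 < j ∧ (snakeCoord m j t).2 < m + 1 := by
  unfold snakeCoord
  split_ifs with h
  · have hm : 0 < m := Nat.pos_of_mul_pos_right (by omega : 0 < m * j)
    exact ⟨Nat.div_lt_of_lt_mul h, by have := boustrophedon_snd_lt hm t; omega⟩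
  · rw [add_one_mul] at ht ⊢
    exact ⟨by omega, by omega⟩

theorem snakeCoord_injOn : Set.InjOn (snakeCoord m j) (Set.Iio ((m + 1) * j)) := by
  intro s hs t ht h
  simp only [Set.mem_Iio, add_one_mul] at hs ht
  unfold snakeCoord at h
  split_ifs at h with hs' ht' ht'
  · exact boustrophedon_injective (Nat.pos_of_mul_pos_right (by omega : 0 < m * j)) h
  · exact absurd (congrArg Prod.snd h)
      (boustrophedon_snd_lt (Nat.pos_of_mul_pos_right (by omega : 0 < m * j)) s).ne
  · exact absurd (congrArg Prod.snd h).symm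
      (boustrophedon_snd_lt (Nat.pos_of_mul_pos_right (by omega : 0 < m * j)) t).ne
  · simp only [Prod.mk.injEq, add_one_mul] at h
    omega

theorem twistedGrid_adj_snakeCoord_succ [NeZero j] (hm : 0 < m) {t : ℕ}
    (ht : t + 1 < (m + 1) * j) :
    (twistedGrid (m + 1) j k).Adj (gridVertex (m + 1) j (snakeCoord m j t))
      (gridVertex (m + 1) j (snakeCoord m j (t + 1))) := by
  have hrow := fun s (hs : s < (m + 1) * j) => (snakeCoord_mem hs).1
  have hrow_t := hrow t (by omega)
  have hrow_succ := hrow (t + 1) ht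
  rw [add_one_mul] at ht
  rcases lt_trichotomy (t + 1) (m * j) with h | h | h
  · refine twistedGrid_adj_gridVertex (by omega) hrow_t hrow_succ ?_
    rw [snakeCoord, snakeCoord, if_pos (by omega), if_pos h]
    exact boustrophedon_adj_succ hm t
  · have ht' : t = m * (j - 1) + (m - 1) := by
      have := Nat.le_mul_of_pos_right m (NeZero.pos j)
      rw [Nat.mul_sub_one]
      omega
    have hcur : snakeCoord m j t = (j - 1, if Even (j - 1) then m - 1 else 0) := by
      rw [snakeCoord, if_pos (by omega), ht', boustrophedon_mul_add (by omega)]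
      simp
    have hnext : snakeCoord m j (t + 1) = (j - 1, m) := by
      rw [snakeCoord, if_neg (by omega), add_one_mul]
      congr 1
      omega
    rw [hcur, hnext]
    split_ifs
    · refine twistedGrid_adj_gridVertex (by omega) (by simp; omega) (by simp; omega) ?_
      simp only [boxProd_adj, hasse_adj, Nat.covBy_iff_add_one_eq, and_true]
      omega
    · exact (twistedGrid_adj_gridVertex_last hm _).symm
  · refine twistedGrid_adj_gridVertex (by omega) hrow_t hrow_succ ?_
    rw [snakeCoord, snakeCoord, if_neg (by omega), if_neg (by omega)]
    simp only [boxProd_adj, hasse_adj, Nat.covBy_iff_add_one_eq, add_one_mul, and_true]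
    omega

theorem twistedGrid_adj_snakeCoord_last [NeZero j] (hm : 0 < m) :
    (twistedGrid (m + 1) j k).Adj (gridVertex (m + 1) j (snakeCoord m j ((m + 1) * j - 1)))
      (gridVertex (m + 1) j (snakeCoord m j 0)) := by
  have hfirst : snakeCoord m j 0 = (0, 0) := by
    rw [snakeCoord, if_pos (Nat.mul_pos hm (NeZero.pos j))]
    simp [boustrophedon]
  have hlast : snakeCoord m j ((m + 1) * j - 1) = (0, m) := by
    have := NeZero.pos j
    rw [snakeCoord, if_neg (by rw [add_one_mul]; omega)]
    simp
  rw [hfirst, hlast]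
  exact twistedGrid_adj_gridVertex_last hm 0

end Snake

theorem twistedGrid_hamiltonian_general (i j k : ℕ) (hi : 3 ≤ i) (hj : 1 ≤ j) :
    ∃ (v : Fin j × ZMod i) (c : (twistedGrid i j k).Walk v v), c.IsHamiltonianCycle := by
  obtain ⟨m, rfl⟩ : ∃ m, i = m + 1 := ⟨i - 1, by omega⟩
  have : NeZero j := ⟨by omega⟩
  have hm : 0 < m := by omega
  refine exists_isHamiltonianCycle_of_injOn (n := (m + 1) * j) (by nlinarith) (by simp [mul_comm])
    (gridVertex (m + 1) j ∘ snakeCoord m j) ?_ (fun t ht => twistedGrid_adj_snakeCoord_succ hm ht)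
    (twistedGrid_adj_snakeCoord_last hm)
  exact gridVertex_injOn.comp snakeCoord_injOn fun t ht => snakeCoord_mem ht

/-- For all `i ≥ 3`, `j ≥ 1` and `0 ≤ k ≤ i-1`, the twisted toroidal grid `T(i,j,k)`
contains a Hamiltonian cycle. -/
theorem twistedGrid_hamiltonian (i j k : ℕ) (hi : 3 ≤ i) (hj : 1 ≤ j) (hk : k ≤ i - 1) :
    ∃ (v : Fin j × ZMod i) (c : (twistedGrid i j k).Walk v v), c.IsHamiltonianCycle :=
  twistedGrid_hamiltonian_general i j k hi hj
end

section
/- Let m ≥ 1, i ≥ 3 and 0 ≤ k ≤ i−1 be integers and set j = 3m. Let G be the simple graph on the vertex set (Fin j) × (ZMod i) whose edges are all edges of the twisted toroidal grid T(i,j,k) together with the diagonal edges {(b,a),(b+1,a+1)} for all a ∈ ZMod i and all b with 0 ≤ b ≤ j−2 and b ≡ 2 (mod 3), and the wrap-around diagonal edges {(j−1,a),(0,a+k+1)} for all a ∈ ZMod i. Then G has a Hamiltonian cycle. -/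
/-!
The cylinder `P_j □ C_i`, made of the row and vertical edges alone, is already Hamiltonian
as soon as it has at least three vertices. Traverse columns `1, …, i - 1` row by row in
boustrophedon order, starting in row `0`, then come back down column `0` from row `j - 1`
to row `0`. The last row ends in column `i - 1` or in column `1`, and both are adjacent to
column `0` on the cycle `C_i`; the first row starts in column `1`, which is adjacent to `(0, 0)`.
-/

open SimpleGraph

theorem SimpleGraph.isHamiltonian_of_enumeration {V : Type*} [Fintype V] [DecidableEq V]
    {G : SimpleGraph V} {N : ℕ} (hN : 3 ≤ N) (hcard : Fintype.card V = N) (f : ℕ → V)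
    (hsurj : ∀ v, ∃ k < N, f k = v) (hadj : ∀ k < N, G.Adj (f k) (f ((k + 1) % N))) :
    G.IsHamiltonian := by
  obtain ⟨n, rfl⟩ : ∃ n, N = n + 3 := ⟨N - 3, by omega⟩
  have hbij : Function.Bijective fun k : Fin (n + 3) => f k := by
    rw [Fintype.bijective_iff_surjective_and_card, hcard, Fintype.card_fin]
    refine ⟨fun v => ?_, rfl⟩
    obtain ⟨k, hk, rfl⟩ := hsurj v
    exact ⟨⟨k, hk⟩, rfl⟩
  have hsucc : ∀ u v : Fin (n + 3), v - u = 1 → G.Adj (f u) (f v) := fun u v h => by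
    rw [sub_eq_iff_eq_add'] at h
    subst h
    simpa [Fin.val_add] using hadj u u.isLt
  let φ : cycleGraph (n + 3) →g G :=
    { toFun k := f k
      map_rel' h := (cycleGraph_adj.mp h).elim (fun h => (hsucc _ _ h).symm) (hsucc _ _) }
  have hcycle : (cycleGraph.cycle n).IsHamiltonianCycle :=
    Walk.isHamiltonianCycle_iff_isCycle_and_length_eq.mpr ⟨cycleGraph.isCycle_cycle, by simp⟩
  exact fun _ => ⟨_, (cycleGraph.cycle n).map φ, hcycle.map (f := φ) hbij⟩

lemma hasse_nat_boxProd_hasse_nat_adj_iff {x y : ℕ × ℕ} :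
    (hasse ℕ □ hasse ℕ).Adj x y ↔
      x.1 = y.1 ∧ (x.2 + 1 = y.2 ∨ y.2 + 1 = x.2) ∨
        x.2 = y.2 ∧ (x.1 + 1 = y.1 ∨ y.1 + 1 = x.1) := by
  simp only [boxProd_adj, hasse_adj, Nat.covBy_iff_add_one_eq]
  tauto

/-- Boustrophedon order on rows of width `p`; columns are numbered from `1`, which leaves
column `0` free for the way back. -/
def snake (p k : ℕ) : ℕ × ℕ := (k / p, if k / p % 2 = 0 then k % p + 1 else p - k % p)

lemma snake_mul_add {p r : ℕ} (b : ℕ) (hr : r < p) :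
    snake p (p * b + r) = (b, if b % 2 = 0 then r + 1 else p - r) := by
  have hp : 0 < p := by omega
  simp [snake, Nat.mul_add_div hp, Nat.div_eq_of_lt hr, Nat.mod_eq_of_lt hr]

lemma hasse_nat_boxProd_hasse_nat_adj_snake_succ {p : ℕ} (hp : 0 < p) (k : ℕ) :
    (hasse ℕ □ hasse ℕ).Adj (snake p k) (snake p (k + 1)) := by
  obtain ⟨b, r, hr, rfl⟩ : ∃ b r, r < p ∧ k = p * b + r :=
    ⟨k / p, k % p, Nat.mod_lt k hp, (Nat.div_add_mod k p).symm⟩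
  rw [hasse_nat_boxProd_hasse_nat_adj_iff]
  by_cases hr' : r + 1 < p
  · rw [snake_mul_add b hr, add_assoc, snake_mul_add b hr']
    split_ifs <;> omega
  · rw [snake_mul_add b hr, show p * b + r + 1 = p * (b + 1) + 0 by rw [mul_add]; omega,
      snake_mul_add (b + 1) hp]
    split_ifs <;> omega

lemma circulantGraph_adj_add_one {R : Type*} [Ring R] [Nontrivial R] (x : R) :
    (circulantGraph ({1} : Set R)).Adj x (x + 1) := by
  simp [circulantGraph_adj]

def cylinderCycle (p j k : ℕ) : ℕ × ℕ :=
  if k < j * p then snake p k else (j * p + j - 1 - k, 0)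

abbrev cylinder (i j : ℕ) : SimpleGraph (Fin j × ZMod i) := pathGraph j □ circulantGraph {1}

lemma cylinder_le_twistedGrid (i j k : ℕ) : cylinder i j ≤ twistedGrid i j k := by
  intro x y h
  refine (fromRel_adj _ _ _).mpr ⟨h.ne, ?_⟩
  rcases h with ⟨hrow, hcol⟩ | ⟨hcol, hrow⟩
  · rw [pathGraph_adj] at hrow
    tauto
  · simp only [circulantGraph_adj, Set.mem_singleton_iff, sub_eq_iff_eq_add'] at hcol
    tauto

section Cylinder

variable {i j : ℕ} [NeZero j]

def toCylinder (x : ℕ × ℕ) : Fin j × ZMod i := (Fin.ofNat j x.1, x.2)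

variable [Fact (1 < i)]

lemma toCylinder_val (v : Fin j × ZMod i) : toCylinder (v.1.val, v.2.val) = v := by
  ext <;> simp [toCylinder]

lemma cylinder_adj_toCylinder {x y : ℕ × ℕ} (hx : x.1 < j) (hy : y.1 < j)
    (h : (hasse ℕ □ hasse ℕ).Adj x y) : (cylinder i j).Adj (toCylinder x) (toCylinder y) := by
  simp only [boxProd_adj, hasse_adj, Nat.covBy_iff_add_one_eq, toCylinder] at h ⊢
  rcases h with ⟨hrow, hcol⟩ | ⟨hcol, hrow⟩
  · refine .inl ⟨?_, by rw [hcol]⟩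
    simpa only [pathGraph_adj, Fin.val_ofNat, Nat.mod_eq_of_lt hx, Nat.mod_eq_of_lt hy]
  · refine .inr ⟨?_, by rw [hrow]⟩
    rcases hcol with hcol | hcol <;> rw [← hcol, Nat.cast_succ]
    · exact circulantGraph_adj_add_one _
    · exact (circulantGraph_adj_add_one _).symm

lemma cylinder_adj_cylinderCycle {k : ℕ} (hk : k < j * i) :
    (cylinder i j).Adj (toCylinder (cylinderCycle (i - 1) j k))
      (toCylinder (cylinderCycle (i - 1) j ((k + 1) % (j * i)))) := by
  have hj : 0 < j := Nat.pos_of_neZero j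
  obtain ⟨p, rfl⟩ : ∃ p, i = p + 1 := ⟨i - 1, by have : 1 < i := Fact.out; omega⟩
  have hp : 0 < p := by have : 1 < p + 1 := Fact.out; omega
  have hN : j * (p + 1) = j * p + j := by ring
  rw [Nat.add_sub_cancel]
  unfold cylinderCycle
  rcases (show k + 1 < j * p ∨ k + 1 = j * p ∨ j * p ≤ k ∧ k + 1 < j * (p + 1) ∨
      k + 1 = j * (p + 1) by omega) with hrows | hturn | ⟨hk₁, hk₂⟩ | hclose
  · rw [Nat.mod_eq_of_lt (by omega), if_pos (by omega), if_pos hrows]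
    refine cylinder_adj_toCylinder ?_ ?_ (hasse_nat_boxProd_hasse_nat_adj_snake_succ hp k) <;>
      simp only [snake, Nat.div_lt_iff_lt_mul hp] <;> linarith
  · have hk : k = p * (j - 1) + (p - 1) := by
      have : p * (j - 1) + p = j * p := by
        rw [Nat.mul_sub_one, Nat.sub_add_cancel (Nat.le_mul_of_pos_right p hj), mul_comm]
      omega
    rw [Nat.mod_eq_of_lt (by omega), if_pos (by omega), if_neg (by omega), hk,
      snake_mul_add _ (by omega),
      show j * p + j - 1 - (p * (j - 1) + (p - 1) + 1) = j - 1 by omega]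
    split_ifs
    · -- column `p + 1` of the boustrophedon is column `0` of the cylinder
      have hwrap : (toCylinder (j - 1, 0) : Fin j × ZMod (p + 1)) = toCylinder (j - 1, p + 1) := by
        rw [toCylinder, toCylinder, ZMod.natCast_self, Nat.cast_zero]
      rw [Nat.sub_add_cancel hp, hwrap]
      exact cylinder_adj_toCylinder (by omega) (by omega)
        (hasse_nat_boxProd_hasse_nat_adj_iff.mpr (by omega))
    · exact cylinder_adj_toCylinder (by omega) (by omega)
        (hasse_nat_boxProd_hasse_nat_adj_iff.mpr (by omega))
  · rw [Nat.mod_eq_of_lt (by omega), if_neg (by omega), if_neg (by omega)]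
    exact cylinder_adj_toCylinder (by omega) (by omega)
      (hasse_nat_boxProd_hasse_nat_adj_iff.mpr (by omega))
  · rw [hclose, Nat.mod_self, if_neg (by omega), if_pos (Nat.mul_pos hj hp),
      show 0 = p * 0 + 0 from rfl, snake_mul_add 0 hp, if_pos (Nat.zero_mod 2)]
    exact cylinder_adj_toCylinder (by omega) (by omega)
      (hasse_nat_boxProd_hasse_nat_adj_iff.mpr (by omega))

lemma exists_toCylinder_cylinderCycle_eq (v : Fin j × ZMod i) :
    ∃ k < j * i, toCylinder (cylinderCycle (i - 1) j k) = v := by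
  obtain ⟨p, rfl⟩ : ∃ p, i = p + 1 := ⟨i - 1, by have : 1 < i := Fact.out; omega⟩
  obtain ⟨⟨b, hb⟩, a⟩ := v
  rw [Nat.add_sub_cancel, ← toCylinder_val (⟨b, hb⟩, a)]
  dsimp only
  have ha : a.val < p + 1 := ZMod.val_lt a
  have hN : j * (p + 1) = j * p + j := by ring
  have hrow : p * b + p ≤ j * p := by
    rw [mul_comm j, ← Nat.mul_succ]
    exact Nat.mul_le_mul_left p hb
  rcases Nat.eq_zero_or_pos a.val with h0 | hpos
  · refine ⟨j * p + (j - 1 - b), by omega, ?_⟩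
    rw [cylinderCycle, if_neg (by omega), h0]
    congr 3
    omega
  · have hr : (if b % 2 = 0 then a.val - 1 else p - a.val) < p := by split_ifs <;> omega
    refine ⟨p * b + (if b % 2 = 0 then a.val - 1 else p - a.val), by omega, ?_⟩
    rw [cylinderCycle, if_pos (by omega), snake_mul_add b hr]
    congr 3
    split_ifs <;> omega

end Cylinder

theorem isHamiltonian_cylinder {i j : ℕ} [Fact (1 < i)] (h : 3 ≤ j * i) :
    (cylinder i j).IsHamiltonian := by
  have : NeZero j := ⟨by rintro rfl; omega⟩
  exact isHamiltonian_of_enumeration h (by simp) (toCylinder ∘ cylinderCycle (i - 1) j)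
    exists_toCylinder_cylinderCycle_eq fun _ => cylinder_adj_cylinderCycle

theorem dsem_3_3_4_2_4_4_1_hamiltonian_general (m i j k : ℕ) (hm : 1 ≤ m) (hj : j = 3 * m)
    (hi : 3 ≤ i) :
    ∃ (v : Fin j × ZMod i)
      (c : (twistedGrid i j k ⊔ SimpleGraph.fromRel (fun p q : Fin j × ZMod i =>
        ((p.1 : ℕ) % 3 = 2 ∧ (q.1 : ℕ) = (p.1 : ℕ) + 1 ∧ q.2 = p.2 + 1) ∨
        ((p.1 : ℕ) = j - 1 ∧ (q.1 : ℕ) = 0 ∧ q.2 = p.2 + (k : ZMod i) + 1))).Walk v v),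
      c.IsHamiltonianCycle := by
  have : Fact (1 < i) := ⟨by omega⟩
  have hji : 3 ≤ j * i := by nlinarith
  refine ((isHamiltonian_cylinder hji).mono ((cylinder_le_twistedGrid i j k).trans le_sup_left)) ?_
  simp only [Fintype.card_prod, Fintype.card_fin, ZMod.card]
  omega

/-- The edge graph of the doubly semi-equivelar map of type `[3³.4²:4⁴]₁` in its
`M(i,j,k)`-representation (`j = 3m`): the twisted toroidal grid together with diagonal
edges `{(b,a),(b+1,a+1)}` for rows `b ≡ 2 (mod 3)` and the wrap-around diagonals
`{(j-1,a),(0,a+k+1)}`, is Hamiltonian. -/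
theorem dsem_3_3_4_2_4_4_1_hamiltonian (m i j k : ℕ) (hm : 1 ≤ m) (hj : j = 3 * m)
    (hi : 3 ≤ i) (hk : k ≤ i - 1) :
    ∃ (v : Fin j × ZMod i)
      (c : (twistedGrid i j k ⊔ SimpleGraph.fromRel (fun p q : Fin j × ZMod i =>
        ((p.1 : ℕ) % 3 = 2 ∧ (q.1 : ℕ) = (p.1 : ℕ) + 1 ∧ q.2 = p.2 + 1) ∨
        ((p.1 : ℕ) = j - 1 ∧ (q.1 : ℕ) = 0 ∧ q.2 = p.2 + (k : ZMod i) + 1))).Walk v v),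
      c.IsHamiltonianCycle :=
  dsem_3_3_4_2_4_4_1_hamiltonian_general m i j k hm hj hi
end

section
/- Let m ≥ 1, i ≥ 3 and 0 ≤ k ≤ i−1 be integers and set j = 4m. Let G be the simple graph on the vertex set (Fin j) × (ZMod i) whose edges are all edges of the twisted toroidal grid T(i,j,k) together with the diagonal edges {(b,a),(b+1,a+1)} for all a ∈ ZMod i and all b with 0 ≤ b ≤ j−2 and b ≡ 3 (mod 4), and the wrap-around diagonal edges {(j−1,a),(0,a+k+1)} for all a ∈ ZMod i. Then G has a Hamiltonian cycle. -/
/-!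
The graph contains the twisted grid `T(i,j,k)`, and for even `j` its row and vertical edges
alone carry a Hamiltonian cycle: snake through columns `1, …, i - 1` row by row, alternating
direction, so that the last row ends next to column `0`, and return along column `0`.
-/

open SimpleGraph

namespace SimpleGraph

variable {α : Type*} {G : SimpleGraph α}

theorem exists_isHamiltonianCycle_of_surjOn [Fintype α] [DecidableEq α] {n : ℕ} (hn : 3 ≤ n)
    (hcard : Fintype.card α = n) (f : ℕ → α) (hsurj : ∀ v, ∃ t < n, f t = v)
    (hadj : ∀ t < n, G.Adj (f t) (f ((t + 1) % n))) :
    ∃ v, ∃ c : G.Walk v v, c.IsHamiltonianCycle := by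
  obtain ⟨n, rfl⟩ : ∃ m, n = m + 3 := ⟨n - 3, by omega⟩
  let g : Fin (n + 3) → α := fun t => f t
  have hg : g.Bijective := by
    refine (Fintype.bijective_iff_surjective_and_card g).2 ⟨fun v => ?_, by simp [hcard]⟩
    obtain ⟨t, ht, rfl⟩ := hsurj v
    exact ⟨⟨t, ht⟩, rfl⟩
  have step (u : Fin (n + 3)) : G.Adj (g u) (g (u + 1)) := by
    simpa [g, Fin.val_add] using hadj u u.2
  let φ : cycleGraph (n + 3) →g G := ⟨g, fun {u v} h => by
    rcases h with h | h
    · rw [← sub_add_cancel u v, h, add_comm]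
      exact (step v).symm
    · rw [← sub_add_cancel v u, h, add_comm]
      exact step u⟩
  have hcycle : (cycleGraph.cycle n).IsHamiltonianCycle :=
    Walk.isHamiltonianCycle_iff_isCycle_and_length_eq.2 ⟨cycleGraph.isCycle_cycle, by simp⟩
  exact ⟨_, (cycleGraph.cycle n).map φ, hcycle.map (f := φ) hg⟩

end SimpleGraph

theorem ZMod.exists_natCast_succ_eq_of_ne_zero {i : ℕ} [NeZero i] {x : ZMod i} (hx : x ≠ 0) :
    ∃ r < i - 1, ((r + 1 : ℕ) : ZMod i) = x := by
  have hpos := ZMod.val_pos.2 hx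
  refine ⟨x.val - 1, by have := x.val_lt; omega, ?_⟩
  rw [Nat.sub_add_cancel hpos, ZMod.natCast_zmod_val]

section TwistedGrid

variable {i j k : ℕ}

theorem twistedGrid_adj_add_one (hi : 1 < i) (b : Fin j) (a : ZMod i) :
    (twistedGrid i j k).Adj (b, a) (b, a + 1) := by
  have : Fact (1 < i) := ⟨hi⟩
  exact (fromRel_adj _ _ _).2 ⟨by simp, Or.inl (Or.inl ⟨rfl, rfl⟩)⟩

theorem twistedGrid_adj_add_neg_one_pow (hi : 1 < i) (b : Fin j) (a : ZMod i) (q : ℕ) :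
    (twistedGrid i j k).Adj (b, a) (b, a + (-1) ^ q) := by
  rcases Nat.even_or_odd q with hq | hq
  · simpa [hq.neg_one_pow] using twistedGrid_adj_add_one hi b a
  · simpa [hq.neg_one_pow, ← sub_eq_add_neg] using (twistedGrid_adj_add_one hi b (a - 1)).symm

theorem twistedGrid_adj_ofNat_succ [NeZero j] {b : ℕ} (hb : b + 1 < j) (a : ZMod i) :
    (twistedGrid i j k).Adj (Fin.ofNat j b, a) (Fin.ofNat j (b + 1), a) := by
  have hrow : (Fin.ofNat j (b + 1) : ℕ) = (Fin.ofNat j b : ℕ) + 1 := by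
    simp only [Fin.val_ofNat, Nat.mod_eq_of_lt hb, Nat.mod_eq_of_lt (Nat.lt_of_succ_lt hb)]
  refine (fromRel_adj _ _ _).2 ⟨fun h => ?_, Or.inl (Or.inr (Or.inl ⟨hrow, rfl⟩))⟩
  have := congrArg (fun v => (v.1 : ℕ)) h
  simp only at this
  omega

/-- Odd rows are traversed leftwards, through the columns `-1, -2, …, -(i - 1)` of `ZMod i`. -/
def serpentine (i j : ℕ) [NeZero j] (t : ℕ) : Fin j × ZMod i :=
  if t < j * (i - 1) then
    (Fin.ofNat j (t / (i - 1)), (-1) ^ (t / (i - 1)) * ((t % (i - 1) + 1 : ℕ) : ZMod i))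
  else (Fin.ofNat j (j - 1 - (t - j * (i - 1))), 0)

variable [NeZero j]

theorem serpentine_snake {q r : ℕ} (hq : q < j) (hr : r < i - 1) :
    serpentine i j (q * (i - 1) + r) = (Fin.ofNat j q, (-1) ^ q * ((r + 1 : ℕ) : ZMod i)) := by
  have hdiv : (q * (i - 1) + r) / (i - 1) = q := by
    rw [add_comm, Nat.add_mul_div_right _ _ (by omega), Nat.div_eq_of_lt hr, zero_add]
  have hmod : (q * (i - 1) + r) % (i - 1) = r := by
    rw [add_comm, Nat.add_mul_mod_self_right, Nat.mod_eq_of_lt hr]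
  have hlt : q * (i - 1) + r < j * (i - 1) := by nlinarith
  rw [serpentine, if_pos hlt, hdiv, hmod]

theorem serpentine_return (s : ℕ) :
    serpentine i j (j * (i - 1) + s) = (Fin.ofNat j (j - 1 - s), 0) := by
  rw [serpentine, if_neg (by omega), Nat.add_sub_cancel_left]

theorem serpentine_surjOn (hi : 1 < i) (v : Fin j × ZMod i) :
    ∃ t < j * i, serpentine i j t = v := by
  have : NeZero i := ⟨by omega⟩
  obtain ⟨b, a⟩ := v
  have hn : j * i = j * (i - 1) + j := by rw [← mul_add_one, Nat.sub_add_cancel hi.le]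
  by_cases ha : a = 0
  · refine ⟨j * (i - 1) + (j - 1 - b), by omega, ?_⟩
    rw [serpentine_return, ha, show j - 1 - (j - 1 - (b : ℕ)) = b by omega, Fin.ofNat_val_eq_self]
  · obtain ⟨r, hr, har⟩ : ∃ r < i - 1, (-1) ^ (b : ℕ) * ((r + 1 : ℕ) : ZMod i) = a := by
      rcases Nat.even_or_odd b with hb | hb
      · obtain ⟨r, hr, h⟩ := ZMod.exists_natCast_succ_eq_of_ne_zero ha
        exact ⟨r, hr, by rw [hb.neg_one_pow, h, one_mul]⟩
      · obtain ⟨r, hr, h⟩ := ZMod.exists_natCast_succ_eq_of_ne_zero (neg_ne_zero.2 ha)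
        exact ⟨r, hr, by rw [hb.neg_one_pow, h, neg_one_mul, neg_neg]⟩
    refine ⟨b * (i - 1) + r, by nlinarith [b.2], ?_⟩
    rw [serpentine_snake b.2 hr, har, Fin.ofNat_val_eq_self]

theorem serpentine_adj (hi : 1 < i) (hj : Even j) {t : ℕ} (ht : t < j * i) :
    (twistedGrid i j k).Adj (serpentine i j t) (serpentine i j ((t + 1) % (j * i))) := by
  have hn : j * i = j * (i - 1) + j := by rw [← mul_add_one, Nat.sub_add_cancel hi.le]
  have hlast : ((i - 1 : ℕ) : ZMod i) = -1 := by
    rw [Nat.cast_sub hi.le, ZMod.natCast_self, Nat.cast_one, zero_sub]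
  rcases lt_or_ge t (j * (i - 1)) with hsnake | hreturn
  · obtain ⟨q, r, hq, hr, rfl⟩ : ∃ q r, q < j ∧ r < i - 1 ∧ t = q * (i - 1) + r :=
      ⟨t / (i - 1), t % (i - 1), (Nat.div_lt_iff_lt_mul (by omega)).2 hsnake,
        Nat.mod_lt _ (by omega), (Nat.div_add_mod' t (i - 1)).symm⟩
    rw [Nat.mod_eq_of_lt (by omega), serpentine_snake hq hr]
    rcases Nat.lt_or_ge (r + 1) (i - 1) with hrow | hrow
    · rw [add_assoc, serpentine_snake hq hrow, Nat.cast_succ (r + 1), mul_add, mul_one]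
      exact twistedGrid_adj_add_neg_one_pow hi _ _ q
    have hnext : q * (i - 1) + r + 1 = (q + 1) * (i - 1) + 0 := by rw [add_mul]; omega
    rw [hnext, show r + 1 = i - 1 by omega, hlast]
    rcases Nat.lt_or_ge (q + 1) j with hcol | hcol
    · rw [serpentine_snake hcol (by omega), zero_add, Nat.cast_one, mul_one, pow_succ]
      exact twistedGrid_adj_ofNat_succ hcol _
    · have hodd : Odd q := by
        rw [show q = j - 1 by omega]
        exact Nat.Even.sub_odd (by omega) hj odd_one
      rw [show q + 1 = j by omega, serpentine_return, hodd.neg_one_pow,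
        show j - 1 - 0 = q by omega]
      simpa using (twistedGrid_adj_add_one (k := k) hi (Fin.ofNat j q) 0).symm
  · obtain ⟨s, rfl⟩ : ∃ s, t = j * (i - 1) + s := ⟨t - j * (i - 1), by omega⟩
    rw [serpentine_return]
    rcases Nat.lt_or_ge (s + 1) j with hcol | hcol
    · rw [Nat.mod_eq_of_lt (by omega), add_assoc, serpentine_return]
      have := twistedGrid_adj_ofNat_succ (k := k) (i := i) (j := j) (b := j - 1 - (s + 1))
        (by omega) 0
      rwa [show j - 1 - (s + 1) + 1 = j - 1 - s by omega, adj_comm] at this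
    · rw [show j * (i - 1) + s + 1 = j * i by omega, Nat.mod_self,
        show 0 = 0 * (i - 1) + 0 by rw [zero_mul], serpentine_snake (by omega) (by omega),
        show j - 1 - s = 0 by omega]
      simpa using twistedGrid_adj_add_one (k := k) hi (Fin.ofNat j 0) 0

end TwistedGrid

theorem twistedGrid_exists_isHamiltonianCycle {i j : ℕ} (k : ℕ) (hi : 1 < i) (hj : Even j)
    (hj0 : j ≠ 0) : ∃ v, ∃ c : (twistedGrid i j k).Walk v v, c.IsHamiltonianCycle := by
  have : NeZero i := ⟨by omega⟩
  have : NeZero j := ⟨hj0⟩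
  have hn : 3 ≤ j * i := by
    obtain ⟨m, rfl⟩ := hj
    have : 1 ≤ m := by omega
    nlinarith
  exact exists_isHamiltonianCycle_of_surjOn hn (by simp) (serpentine i j) (serpentine_surjOn hi)
    fun _ ht => serpentine_adj hi hj ht

theorem dsem_3_3_4_2_4_4_2_hamiltonian_general (m i j k : ℕ) (hm : 1 ≤ m) (hj : j = 4 * m)
    (hi : 3 ≤ i) :
    ∃ (v : Fin j × ZMod i)
      (c : (twistedGrid i j k ⊔ SimpleGraph.fromRel (fun p q : Fin j × ZMod i =>
        ((p.1 : ℕ) % 4 = 3 ∧ (q.1 : ℕ) = (p.1 : ℕ) + 1 ∧ q.2 = p.2 + 1) ∨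
        ((p.1 : ℕ) = j - 1 ∧ (q.1 : ℕ) = 0 ∧ q.2 = p.2 + (k : ZMod i) + 1))).Walk v v),
      c.IsHamiltonianCycle := by
  obtain ⟨v, c, hc⟩ := twistedGrid_exists_isHamiltonianCycle k (show 1 < i by omega)
    (show Even j from ⟨2 * m, by omega⟩) (show j ≠ 0 by omega)
  exact ⟨v, c.mapLe le_sup_left, hc.map (f := Hom.ofLE le_sup_left) Function.bijective_id⟩

/-- The edge graph of the doubly semi-equivelar map of type `[3³.4²:4⁴]₂` in its
`M(i,j,k)`-representation (`j = 4m`): the twisted toroidal grid together with diagonal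
edges `{(b,a),(b+1,a+1)}` for rows `b ≡ 3 (mod 4)` and the wrap-around diagonals
`{(j-1,a),(0,a+k+1)}`, is Hamiltonian. -/
theorem dsem_3_3_4_2_4_4_2_hamiltonian (m i j k : ℕ) (hm : 1 ≤ m) (hj : j = 4 * m)
    (hi : 3 ≤ i) (hk : k ≤ i - 1) :
    ∃ (v : Fin j × ZMod i)
      (c : (twistedGrid i j k ⊔ SimpleGraph.fromRel (fun p q : Fin j × ZMod i =>
        ((p.1 : ℕ) % 4 = 3 ∧ (q.1 : ℕ) = (p.1 : ℕ) + 1 ∧ q.2 = p.2 + 1) ∨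
        ((p.1 : ℕ) = j - 1 ∧ (q.1 : ℕ) = 0 ∧ q.2 = p.2 + (k : ZMod i) + 1))).Walk v v),
      c.IsHamiltonianCycle :=
  dsem_3_3_4_2_4_4_2_hamiltonian_general m i j k hm hj hi
end

section
/- Let m ≥ 2 and n ≥ 1 be integers, set i = 4m and j = 2n, and let 0 ≤ k ≤ i−1. Let G be the simple graph on the vertex set (Fin j) × (ZMod i) whose edges are all edges of the twisted toroidal grid T(i,j,k) together with: the diagonal edges {(b,a+1),(b+1,a)} for all a ∈ ZMod i with a ≡ 0 or 1 (mod 4) and all even b with 0 ≤ b ≤ j−2; the diagonal edges {(b,a),(b+1,a+1)} for all a ∈ ZMod i with a ≡ 2 or 3 (mod 4) and all odd b with 0 ≤ b ≤ j−2; and the wrap-around diagonal edges {(j−1,a),(0,a+1+k)} for all a ∈ ZMod i with a ≡ 2 or 3 (mod 4). Then G has a Hamiltonian cycle. -/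
theorem List.nodup_of_forall_mem_of_length_eq_card {V : Type*} [Fintype V] [DecidableEq V]
    {l : List V} (hmem : ∀ v, v ∈ l) (hlen : l.length = Fintype.card V) : l.Nodup := by
  have huniv : l.toFinset = Finset.univ :=
    Finset.eq_univ_of_forall fun v ↦ List.mem_toFinset.2 (hmem v)
  rw [← Multiset.coe_nodup, ← Multiset.toFinset_card_eq_card_iff_nodup]
  simpa [huniv] using hlen.symm

namespace SimpleGraph

theorem exists_isHamiltonianCycle_of_isChain {V : Type*} [Fintype V] [DecidableEq V]
    {G : SimpleGraph V} {l : List V} (hmem : ∀ v, v ∈ l) (hlen : l.length = Fintype.card V)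
    (h3 : 3 ≤ l.length)
    (hchain : l.IsChain G.Adj) (hclose : ∀ a ∈ l.getLast?, ∀ b ∈ l.head?, G.Adj a b) :
    ∃ (v : V) (c : G.Walk v v), c.IsHamiltonianCycle := by
  obtain _ | ⟨u, l⟩ := l
  · simp at h3
  have hclosed : (u :: (l ++ [u])).IsChain G.Adj := by
    rw [← List.cons_append]
    exact hchain.append (.singleton u) (by simpa using hclose)
  let c : G.Walk u u :=
    (Walk.ofSupport (u :: (l ++ [u])) (List.cons_ne_nil _ _) hclosed).copy rfl (by simp)
  have hsupp : c.support = u :: (l ++ [u]) :=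
    (Walk.support_copy _ _ _).trans (Walk.support_ofSupport _ _)
  have hnodup : (l ++ [u]).Nodup :=
    (List.perm_append_singleton u l).nodup_iff.2
      (List.nodup_of_forall_mem_of_length_eq_card hmem hlen)
  have hlength : c.length = l.length + 1 := by
    simpa using congrArg List.length hsupp
  refine ⟨u, c, ?_⟩
  rw [Walk.isHamiltonianCycle_iff_isCycle_and_support_count_tail_eq_one,
    Walk.isCycle_iff_isPath_tail_and_le_length]
  refine ⟨⟨?_, ?_⟩, fun v ↦ ?_⟩
  · rw [Walk.isPath_def, Walk.support_tail_of_not_nil _ ?_, hsupp]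
    · exact hnodup
    · simp [← Walk.length_eq_zero_iff, hlength]
  · simp only [List.length_cons] at h3
    omega
  · rw [hsupp, List.tail_cons]
    exact List.count_eq_one_of_mem hnodup (by simpa [or_comm] using hmem v)

abbrev natGrid : SimpleGraph (ℕ × ℕ) := hasse ℕ □ hasse ℕ

lemma natGrid_adj_add_one_right (b a : ℕ) : natGrid.Adj (b, a) (b, a + 1) := by
  simp [boxProd_adj, hasse_adj]

lemma natGrid_adj_add_one_left (b a : ℕ) : natGrid.Adj (b, a) (b + 1, a) := by
  simp [boxProd_adj, hasse_adj]

def gridRow (w b : ℕ) : List (ℕ × ℕ) :=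
  (List.range (w - 1)).map fun a ↦ (b, a + 1)

/-- The cells of the `2n × w` grid in the order of a Hamiltonian cycle from `(2n-1, 1)` to
`(2n-1, 0)`. -/
def gridCycle (w : ℕ) : ℕ → List (ℕ × ℕ)
  | 0 => []
  | n + 1 => gridRow w (2 * n + 1) ++ (gridRow w (2 * n)).reverse ++ gridCycle w n ++
      [(2 * n, 0), (2 * n + 1, 0)]

lemma mem_gridRow {w b : ℕ} {x : ℕ × ℕ} :
    x ∈ gridRow w b ↔ x.1 = b ∧ 0 < x.2 ∧ x.2 < w := by
  obtain ⟨x1, x2⟩ := x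
  simp only [gridRow, List.mem_map, List.mem_range, Prod.mk.injEq]
  constructor
  · rintro ⟨a, ha, rfl, rfl⟩
    omega
  · rintro ⟨rfl, h0, hw⟩
    exact ⟨x2 - 1, by omega, rfl, by omega⟩

lemma mem_gridCycle {w n : ℕ} (hw : 0 < w) {x : ℕ × ℕ} :
    x ∈ gridCycle w n ↔ x.1 < 2 * n ∧ x.2 < w := by
  obtain ⟨x1, x2⟩ := x
  induction n with
  | zero => simp [gridCycle]
  | succ n ih =>
    simp only [gridCycle, List.mem_append, List.mem_reverse, mem_gridRow, ih, List.mem_cons,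
      List.not_mem_nil, or_false, Prod.mk.injEq]
    omega

lemma length_gridCycle {w : ℕ} (hw : 0 < w) (n : ℕ) : (gridCycle w n).length = 2 * n * w := by
  induction n with
  | zero => simp [gridCycle]
  | succ n ih =>
    obtain ⟨w, rfl⟩ := Nat.exists_eq_add_of_lt hw
    simp only [gridCycle, gridRow, List.length_append, List.length_reverse, List.length_map,
      List.length_range, ih, List.length_cons, List.length_nil]
    ring_nf
    omega

lemma isChain_gridRow (w b : ℕ) : (gridRow w b).IsChain natGrid.Adj :=
  List.isChain_map_of_isChain _ (fun _ _ h ↦ h ▸ natGrid_adj_add_one_right _ _)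
    ((List.isChain_range _ _).2 fun _ _ ↦ rfl)

lemma gridRow_head? {w : ℕ} (hw : 2 ≤ w) (b : ℕ) : (gridRow w b).head? = some (b, 1) := by
  simp [gridRow, List.head?_range, show w - 1 ≠ 0 by omega]

lemma gridRow_getLast? {w : ℕ} (hw : 2 ≤ w) (b : ℕ) :
    (gridRow w b).getLast? = some (b, w - 1) := by
  simp only [gridRow, List.getLast?_map, List.getLast?_range, show w - 1 ≠ 0 by omega,
    ↓reduceIte, Option.map_some, Option.some.injEq, Prod.mk.injEq, true_and]
  omega

lemma gridCycle_succ_head? {w : ℕ} (hw : 2 ≤ w) (n : ℕ) :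
    (gridCycle w (n + 1)).head? = some (2 * n + 1, 1) := by
  simp [gridCycle, List.head?_append, gridRow_head? hw]

lemma gridCycle_succ_getLast? (w n : ℕ) :
    (gridCycle w (n + 1)).getLast? = some (2 * n + 1, 0) := by
  simp [gridCycle]

lemma isChain_gridCycle {w : ℕ} (hw : 2 ≤ w) (n : ℕ) :
    (gridCycle w n).IsChain natGrid.Adj := by
  induction n with
  | zero => exact .nil
  | succ n ih =>
    have hrows : (gridRow w (2 * n + 1) ++ (gridRow w (2 * n)).reverse).IsChain natGrid.Adj := by
      refine (isChain_gridRow w _).append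
        (List.isChain_reverse.2 ((isChain_gridRow w _).imp fun _ _ h ↦ h.symm)) ?_
      simp only [List.head?_reverse, gridRow_getLast? hw, Option.mem_def, Option.some.injEq]
      rintro _ rfl _ rfl
      exact (natGrid_adj_add_one_left _ _).symm
    have hrows_last : (gridRow w (2 * n + 1) ++ (gridRow w (2 * n)).reverse).getLast? =
        some (2 * n, 1) := by
      simp [List.getLast?_append, gridRow_head? hw]
    refine (hrows.append ih ?_).append (List.isChain_pair.2 (natGrid_adj_add_one_left _ _)) ?_
    · cases n with
      | zero => simp [gridCycle]
      | succ n =>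
        simp only [hrows_last, gridCycle_succ_head? hw, Option.mem_def, Option.some.injEq]
        rintro _ rfl _ rfl
        exact (natGrid_adj_add_one_left _ _).symm
    · cases n with
      | zero =>
        simp only [gridCycle, List.append_nil, hrows_last, List.head?_cons, Option.mem_def,
          Option.some.injEq]
        rintro _ rfl _ rfl
        exact (natGrid_adj_add_one_right 0 0).symm
      | succ n =>
        simp only [List.getLast?_append, gridCycle_succ_getLast?, Option.some_or,
          List.head?_cons, Option.mem_def, Option.some.injEq]
        rintro _ rfl _ rfl
        exact natGrid_adj_add_one_left _ _

theorem exists_isHamiltonianCycle_of_grid {V : Type*} [Fintype V] [DecidableEq V]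
    {G : SimpleGraph V} {n w : ℕ} (hn : n ≠ 0) (hw : 2 ≤ w) (φ : ℕ × ℕ → V)
    (hcard : Fintype.card V = 2 * n * w)
    (hsurj : ∀ v, ∃ x : ℕ × ℕ, x.1 < 2 * n ∧ x.2 < w ∧ φ x = v)
    (hadj : ∀ x y : ℕ × ℕ, x.1 < 2 * n → x.2 < w → y.1 < 2 * n → y.2 < w →
      natGrid.Adj x y → G.Adj (φ x) (φ y)) :
    ∃ (v : V) (c : G.Walk v v), c.IsHamiltonianCycle := by
  obtain ⟨n, rfl⟩ := Nat.exists_eq_succ_of_ne_zero hn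
  have hmem {x : ℕ × ℕ} := mem_gridCycle (w := w) (n := n + 1) (x := x) (by omega)
  have hlen : ((gridCycle w (n + 1)).map φ).length = 2 * (n + 1) * w := by
    rw [List.length_map, length_gridCycle (by omega)]
  refine exists_isHamiltonianCycle_of_isChain (l := (gridCycle w (n + 1)).map φ) ?_
    (hlen.trans hcard.symm) (by rw [hlen]; nlinarith) ?_ ?_
  · intro v
    obtain ⟨x, hx1, hx2, rfl⟩ := hsurj v
    exact List.mem_map_of_mem (hmem.2 ⟨hx1, hx2⟩)
  · refine (List.isChain_map φ).2 ((isChain_gridCycle hw _).imp_of_mem_imp ?_)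
    intro x y hx hy h
    exact hadj x y (hmem.1 hx).1 (hmem.1 hx).2 (hmem.1 hy).1 (hmem.1 hy).2 h
  · simp only [List.getLast?_map, List.head?_map, gridCycle_succ_getLast?,
      gridCycle_succ_head? hw, Option.map_some, Option.mem_def, Option.some.injEq]
    rintro _ rfl _ rfl
    exact hadj _ _ (by omega) (by omega) (by omega) (by omega) (natGrid_adj_add_one_right _ _)

end SimpleGraph

section TwistedGrid

open SimpleGraph

variable {i j k : ℕ} [NeZero j]

lemma twistedGrid_adj_ofNat_add_one_right (b : ℕ) {a : ℕ} (ha : a + 1 < i) :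
    (twistedGrid i j k).Adj (Fin.ofNat j b, (a : ZMod i))
      (Fin.ofNat j b, ((a + 1 : ℕ) : ZMod i)) := by
  refine (fromRel_adj _ _ _).2 ⟨fun h ↦ ?_, Or.inl (Or.inl ⟨rfl, Nat.cast_succ a⟩)⟩
  have := congrArg (ZMod.val ∘ Prod.snd) h
  simp only [Function.comp_apply, ZMod.val_cast_of_lt (show a < i by omega),
    ZMod.val_cast_of_lt ha] at this
  omega

lemma twistedGrid_adj_ofNat_add_one_left {b : ℕ} (hb : b + 1 < j) (a : ℕ) :
    (twistedGrid i j k).Adj (Fin.ofNat j b, (a : ZMod i))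
      (Fin.ofNat j (b + 1), (a : ZMod i)) := by
  have hval : (Fin.ofNat j (b + 1) : ℕ) = (Fin.ofNat j b : ℕ) + 1 := by
    simp only [Fin.val_ofNat, Nat.mod_eq_of_lt hb, Nat.mod_eq_of_lt (show b < j by omega)]
  refine (fromRel_adj _ _ _).2 ⟨ne_of_apply_ne (fun p ↦ (p.1 : ℕ)) ?_,
    Or.inl (Or.inr (Or.inl ⟨hval, rfl⟩))⟩
  simp only [hval]
  omega

lemma twistedGrid_adj_ofNat {x y : ℕ × ℕ} (hx : x.1 < j) (hy : y.1 < j) (hx' : x.2 < i)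
    (hy' : y.2 < i) (h : natGrid.Adj x y) :
    (twistedGrid i j k).Adj (Fin.ofNat j x.1, (x.2 : ZMod i))
      (Fin.ofNat j y.1, (y.2 : ZMod i)) := by
  obtain ⟨x1, x2⟩ := x
  obtain ⟨y1, y2⟩ := y
  simp only [boxProd_adj, hasse_adj, Nat.covBy_iff_add_one_eq] at h hx hy hx' hy' ⊢
  rcases h with ⟨rfl | rfl, rfl⟩ | ⟨rfl | rfl, rfl⟩
  · exact twistedGrid_adj_ofNat_add_one_left hy _
  · exact (twistedGrid_adj_ofNat_add_one_left hx _).symm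
  · exact twistedGrid_adj_ofNat_add_one_right _ hy'
  · exact (twistedGrid_adj_ofNat_add_one_right _ hx').symm

end TwistedGrid

theorem dsem_3_3_4_2_3_2_4_3_4_2_hamiltonian_general (m n i j k : ℕ) (hm : 2 ≤ m) (hn : 1 ≤ n)
    (hi : i = 4 * m) (hj : j = 2 * n) :
    ∃ (v : Fin j × ZMod i)
      (c : (twistedGrid i j k ⊔ SimpleGraph.fromRel (fun p q : Fin j × ZMod i =>
        ((p.1 : ℕ) % 2 = 0 ∧ (q.1 : ℕ) = (p.1 : ℕ) + 1 ∧ p.2 = q.2 + 1 ∧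
          (q.2.val % 4 = 0 ∨ q.2.val % 4 = 1)) ∨
        ((p.1 : ℕ) % 2 = 1 ∧ (q.1 : ℕ) = (p.1 : ℕ) + 1 ∧ q.2 = p.2 + 1 ∧
          (p.2.val % 4 = 2 ∨ p.2.val % 4 = 3)) ∨
        ((p.1 : ℕ) = j - 1 ∧ (q.1 : ℕ) = 0 ∧ q.2 = p.2 + 1 + (k : ZMod i) ∧
          (p.2.val % 4 = 2 ∨ p.2.val % 4 = 3)))).Walk v v),
      c.IsHamiltonianCycle := by
  have : NeZero i := ⟨by omega⟩
  have : NeZero j := ⟨by omega⟩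
  refine SimpleGraph.exists_isHamiltonianCycle_of_grid (n := n) (w := i) (by omega) (by omega)
    (fun x ↦ (Fin.ofNat j x.1, (x.2 : ZMod i))) ?_ ?_ ?_
  · simp [Fintype.card_prod, ZMod.card, hj]
  · rintro ⟨b, a⟩
    exact ⟨(b.val, a.val), by omega, a.val_lt, by simp⟩
  · intro x y hx1 hx2 hy1 hy2 h
    exact Or.inl (twistedGrid_adj_ofNat (by omega) (by omega) hx2 hy2 h)

/-- The edge graph of the doubly semi-equivelar map of type `[3³.4²:3².4.3.4]₂` in its
`M(i,j,k)`-representation (`i = 4m`, `j = 2n`): the twisted toroidal grid together with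
the diagonal edges `{(b,a+1),(b+1,a)}` for `a ≡ 0, 1 (mod 4)` and `b` even, the diagonal
edges `{(b,a),(b+1,a+1)}` for `a ≡ 2, 3 (mod 4)` and `b` odd, and the wrap-around
diagonals `{(j-1,a),(0,a+1+k)}` for `a ≡ 2, 3 (mod 4)`, is Hamiltonian. -/
theorem dsem_3_3_4_2_3_2_4_3_4_2_hamiltonian (m n i j k : ℕ) (hm : 2 ≤ m) (hn : 1 ≤ n)
    (hi : i = 4 * m) (hj : j = 2 * n) (hk : k ≤ i - 1) :
    ∃ (v : Fin j × ZMod i)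
      (c : (twistedGrid i j k ⊔ SimpleGraph.fromRel (fun p q : Fin j × ZMod i =>
        ((p.1 : ℕ) % 2 = 0 ∧ (q.1 : ℕ) = (p.1 : ℕ) + 1 ∧ p.2 = q.2 + 1 ∧
          (q.2.val % 4 = 0 ∨ q.2.val % 4 = 1)) ∨
        ((p.1 : ℕ) % 2 = 1 ∧ (q.1 : ℕ) = (p.1 : ℕ) + 1 ∧ q.2 = p.2 + 1 ∧
          (p.2.val % 4 = 2 ∨ p.2.val % 4 = 3)) ∨
        ((p.1 : ℕ) = j - 1 ∧ (q.1 : ℕ) = 0 ∧ q.2 = p.2 + 1 + (k : ZMod i) ∧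
          (p.2.val % 4 = 2 ∨ p.2.val % 4 = 3)))).Walk v v),
      c.IsHamiltonianCycle :=
  dsem_3_3_4_2_3_2_4_3_4_2_hamiltonian_general m n i j k hm hn hi hj
end
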